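/- For a vertex k of a quiver with good potential, the chain map β* : P_i → T_k constructed from ∂S/∂β is irreducible: it does not factor as a composition of a nontrivial map P_i → P_r (r ≠ k, given by an arrow γ of Q) followed by a map P_r → T_k, because such a factorization would force all terms of ∂S/∂β to share the length-two subpath γβ, contradicting goodness of S. -/

import Mathlib

/-- A quiver given by a vertex set, an arrow set and source/target maps. -/
structure Quiv where
  V : Type
  E : Type
  s : E → V
  t : E → V

namespace Quiv

/-- A path `a₁ a₂ ⋯ aₙ`, written with the composition-of-functions convention,
is a list of arrows such that the source of each arrow is the target of the next one. -/
def IsPath (q : Quiv) : List q.E → Prop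
  | [] => True
  | [_] => True
  | a :: b :: l => q.s a = q.t b ∧ IsPath q (b :: l)

variable (q : Quiv)

/-- The source of a (nonempty) path. -/
def pSrc (l : List q.E) : Option q.V := l.getLast?.map q.s

/-- The target of a (nonempty) path. -/
def pTgt (l : List q.E) : Option q.V := l.head?.map q.t

/-- A cycle is a nonempty path whose source equals its target. -/
def IsCycle (l : List q.E) : Prop := l ≠ [] ∧ q.IsPath l ∧ q.pSrc l = q.pTgt l

variable (K : Type) [Field K]

open Classical in
/-- The cyclic derivative of a single cycle `a₁ ⋯ aₙ` with respect to an arrow `x`: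
`∑ₖ δ(x, aₖ) • a_{k+1} ⋯ aₙ a₁ ⋯ a_{k-1}`, as an element of the vector space
spanned by paths. -/
noncomputable def cycDerList (x : q.E) (l : List q.E) : List q.E →₀ K :=
  ∑ k ∈ Finset.range l.length,
    if l[k]? = some x then Finsupp.single (l.drop (k + 1) ++ l.take k) 1 else 0

/-- The cyclic derivative of a potential (a linear combination of cycles)
with respect to an arrow `x`, extended linearly. -/
noncomputable def cycDer (x : q.E) (S : List q.E →₀ K) : List q.E →₀ K :=
  S.sum fun l c => c • q.cycDerList K x l

/-- Two potentials are cyclically equivalent if their difference lies in the span of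
the elements `a₁ ⋯ a_{n-1} aₙ - a₂ ⋯ aₙ a₁` for cycles `a₁ ⋯ aₙ`. -/
def CycEquiv (S S' : List q.E →₀ K) : Prop :=
  S - S' ∈ Submodule.span K
    {x : List q.E →₀ K | ∃ l : List q.E, q.IsCycle l ∧
      x = Finsupp.single l 1 - Finsupp.single (l.rotate 1) 1}

end Quiv

namespace Quiv

variable (q : Quiv) (K : Type) [Field K]

/-- The cyclically consecutive pairs of arrows of a cycle `a₁ ⋯ aₙ`:
these record its subpaths of length two. -/
def cycPairs (l : List q.E) : List (q.E × q.E) := l.zip (l.rotate 1)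

open Classical in
/-- A potential `S` is good if it is a linear combination of cycles, each arrow of the quiver
appears at least twice among its terms, and no subpath of length two appears twice. -/
def Good (S : List q.E →₀ K) : Prop :=
  (∀ l ∈ S.support, q.IsCycle l) ∧
  (∀ e : q.E, 2 ≤ ∑ l ∈ S.support, l.count e) ∧
  (∀ p : q.E × q.E, (∑ l ∈ S.support, (q.cycPairs l).count p) ≤ 1)

end Quiv

namespace Quiv

variable (K : Type) [Field K] (q : Quiv) [Fintype q.V]

/-- The defining relations of the path algebra `KQ` as a quotient of the free algebra on
the vertices and arrows of `Q`: the vertices become a complete set of orthogonal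
idempotents, and each arrow `e` satisfies `e = e_{t(e)} · e · e_{s(e)}`. -/
inductive PathRel : FreeAlgebra K (q.V ⊕ q.E) → FreeAlgebra K (q.V ⊕ q.E) → Prop
  | vtxIdem (i : q.V) : PathRel (FreeAlgebra.ι K (Sum.inl i) * FreeAlgebra.ι K (Sum.inl i))
      (FreeAlgebra.ι K (Sum.inl i))
  | vtxOrtho (i j : q.V) : i ≠ j →
      PathRel (FreeAlgebra.ι K (Sum.inl i) * FreeAlgebra.ι K (Sum.inl j)) 0
  | vtxSum : PathRel (∑ i : q.V, FreeAlgebra.ι K (Sum.inl i)) 1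
  | tgtMul (e : q.E) : PathRel
      (FreeAlgebra.ι K (Sum.inl (q.t e)) * FreeAlgebra.ι K (Sum.inr e))
      (FreeAlgebra.ι K (Sum.inr e))
  | srcMul (e : q.E) : PathRel
      (FreeAlgebra.ι K (Sum.inr e) * FreeAlgebra.ι K (Sum.inl (q.s e)))
      (FreeAlgebra.ι K (Sum.inr e))
  | tgtZero (e : q.E) (i : q.V) : i ≠ q.t e → PathRel
      (FreeAlgebra.ι K (Sum.inl i) * FreeAlgebra.ι K (Sum.inr e)) 0
  | srcZero (e : q.E) (i : q.V) : i ≠ q.s e → PathRel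
      (FreeAlgebra.ι K (Sum.inr e) * FreeAlgebra.ι K (Sum.inl i)) 0

/-- The path algebra `KQ` of the quiver `Q` over the field `K`. -/
def PathAlg := RingQuot (PathRel K q)

noncomputable instance : Ring (PathAlg K q) :=
  inferInstanceAs (Ring (RingQuot (PathRel K q)))

noncomputable instance : Algebra K (PathAlg K q) :=
  inferInstanceAs (Algebra K (RingQuot (PathRel K q)))

/-- The idempotent of the path algebra corresponding to a vertex. -/
noncomputable def vtx (i : q.V) : PathAlg K q :=
  RingQuot.mkAlgHom K (PathRel K q) (FreeAlgebra.ι K (Sum.inl i))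

/-- The element of the path algebra corresponding to an arrow. -/
noncomputable def arr (e : q.E) : PathAlg K q :=
  RingQuot.mkAlgHom K (PathRel K q) (FreeAlgebra.ι K (Sum.inr e))

/-- The element of the path algebra corresponding to a path `a₁ ⋯ aₙ`
(product of its arrows). -/
noncomputable def pathEl : List q.E → PathAlg K q
  | [] => 1
  | e :: l => arr K q e * pathEl l

/-- The element of the path algebra corresponding to a linear combination of paths. -/
noncomputable def el (S : List q.E →₀ K) : PathAlg K q :=
  S.sum fun l c => c • pathEl K q l

/-- The relations of the Jacobian algebra: all cyclic derivatives of the potential `S`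
are set to zero. -/
inductive JacobRel (S : List q.E →₀ K) : PathAlg K q → PathAlg K q → Prop
  | deriv (x : q.E) : JacobRel S (el K q (q.cycDer K x S)) 0

/-- The Jacobian algebra `J(Q,S) = KQ / ⟨∂S/∂x : x ∈ Q₁⟩` of a quiver with potential. -/
def Jacob (S : List q.E →₀ K) := RingQuot (JacobRel K q S)

noncomputable instance (S : List q.E →₀ K) : Ring (Jacob K q S) :=
  inferInstanceAs (Ring (RingQuot (JacobRel K q S)))

noncomputable instance (S : List q.E →₀ K) : Algebra K (Jacob K q S) :=
  inferInstanceAs (Algebra K (RingQuot (JacobRel K q S)))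

/-- The projection from the path algebra onto the Jacobian algebra. -/
noncomputable def jmk (S : List q.E →₀ K) : PathAlg K q →ₐ[K] Jacob K q S :=
  RingQuot.mkAlgHom K (JacobRel K q S)

end Quiv

open CategoryTheory CategoryTheory.Limits ZeroObject

/-- The two-term cochain complex `0 → X → Y → 0` with `X` in degree `0` and `Y` in
degree `1`, and differential `f`. -/
noncomputable def twoTerm {C : Type _} [Category C] [HasZeroMorphisms C] [HasZeroObject C]
    (X Y : C) (f : X ⟶ Y) : CochainComplex C ℤ where
  X n := if n = 0 then X else if n = 1 then Y else 0
  d i j :=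
    if h : i = 0 ∧ j = 1 then
      eqToHom (by rw [h.1]; simp) ≫ f ≫ eqToHom (by rw [h.2]; simp)
    else 0
  shape i j hij := by
    try dsimp only
    rw [dif_neg]
    rintro ⟨rfl, rfl⟩
    exact hij (by simp [ComplexShape.up])
  d_comp_d' i j k hij hjk := by
    try dsimp only
    by_cases h : i = 0 ∧ j = 1
    · obtain ⟨h0, h1⟩ := h
      subst h0; subst h1
      rw [dif_pos ⟨rfl, rfl⟩, dif_neg (fun hc => one_ne_zero hc.1), comp_zero]
    · rw [dif_neg h, zero_comp]

namespace Quiv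

variable (K : Type) [Field K] (q : _root_.Quiv) [Fintype q.V] [Fintype q.E]
  [DecidableEq q.V] [DecidableEq q.E] (S : List q.E →₀ K)

/-- The image of a vertex idempotent in the Jacobian algebra. -/
noncomputable def vtxJ (i : q.V) : Jacob K q S := jmk K q S (vtx K q i)

/-- The image of an arrow in the Jacobian algebra. -/
noncomputable def arrJ (e : q.E) : Jacob K q S := jmk K q S (arr K q e)

/-- The image of a path in the Jacobian algebra. -/
noncomputable def pathJ (l : List q.E) : Jacob K q S := jmk K q S (pathEl K q l)

/-- The indecomposable projective right module `Pᵢ = eᵢ R` over the Jacobian algebra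
`R = J(Q,S)`, realized as the `Rᵐᵒᵖ`-submodule of `R` spanned by the idempotent `eᵢ`
(right modules are modules over the opposite algebra). -/
noncomputable def P (i : q.V) : Submodule (Jacob K q S)ᵐᵒᵖ (Jacob K q S) :=
  Submodule.span (Jacob K q S)ᵐᵒᵖ {vtxJ K q S i}

/-- Left multiplication by an element of the Jacobian algebra, as an endomorphism of
the regular right module. -/
noncomputable def leftMul (x : Jacob K q S) :
    Jacob K q S →ₗ[(Jacob K q S)ᵐᵒᵖ] Jacob K q S where
  toFun y := x * y
  map_add' a b := mul_add x a b
  map_smul' r y := by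
    simp only [MulOpposite.smul_eq_mul_unop, RingHom.id_apply, mul_assoc]

/-- The set of arrows into a given vertex `k`. -/
def In (k : q.V) : Type := {e : q.E // q.t e = k}

instance (k : q.V) : Fintype (q.In k) :=
  inferInstanceAs (Fintype {e : q.E // q.t e = k})

instance (k : q.V) : DecidableEq (q.In k) :=
  inferInstanceAs (DecidableEq {e : q.E // q.t e = k})

lemma vtxJ_mul_arrJ (e : q.E) :
    vtxJ K q S (q.t e) * arrJ K q S e = arrJ K q S e := by
  have h : RingQuot.mkAlgHom K (PathRel K q)
        (FreeAlgebra.ι K (Sum.inl (q.t e)) * FreeAlgebra.ι K (Sum.inr e))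
      = RingQuot.mkAlgHom K (PathRel K q) (FreeAlgebra.ι K (Sum.inr e)) :=
    RingQuot.mkAlgHom_rel K (PathRel.tgtMul e)
  rw [map_mul] at h
  rw [vtxJ, arrJ, ← map_mul]
  exact congrArg (jmk K q S) h

lemma arrJ_mul_vtxJ (e : q.E) :
    arrJ K q S e * vtxJ K q S (q.s e) = arrJ K q S e := by
  have h : RingQuot.mkAlgHom K (PathRel K q)
        (FreeAlgebra.ι K (Sum.inr e) * FreeAlgebra.ι K (Sum.inl (q.s e)))
      = RingQuot.mkAlgHom K (PathRel K q) (FreeAlgebra.ι K (Sum.inr e)) :=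
    RingQuot.mkAlgHom_rel K (PathRel.srcMul e)
  rw [map_mul] at h
  rw [arrJ, vtxJ, ← map_mul]
  exact congrArg (jmk K q S) h

lemma arrJ_mem (e : q.E) (y : Jacob K q S) (hy : y ∈ P K q S (q.s e)) :
    arrJ K q S e * y ∈ P K q S (q.t e) := by
  rcases Submodule.mem_span_singleton.1 hy with ⟨c, rfl⟩
  refine Submodule.mem_span_singleton.2 ⟨MulOpposite.op (arrJ K q S e * c.unop), ?_⟩
  simp only [MulOpposite.smul_eq_mul_unop, MulOpposite.unop_op]
  rw [← mul_assoc, vtxJ_mul_arrJ, ← mul_assoc, arrJ_mul_vtxJ]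

/-- Left multiplication by an arrow `e : j → k`, as a map of right modules
`P_j → P_k` (the component of the presentation map of `T_k`). -/
noncomputable def arrMul (k : q.V) (e : q.In k) :
    ↥(P K q S (q.s e.1)) →ₗ[(Jacob K q S)ᵐᵒᵖ] ↥(P K q S k) :=
  (leftMul K q S (arrJ K q S e.1)).restrict (p := P K q S (q.s e.1)) (q := P K q S k)
    (fun y hy => by
      have := arrJ_mem K q S e.1 y hy
      rwa [e.2] at this)

/-- The direct sum `⊕_{j → k} P_j` over all arrows into `k`. -/
noncomputable abbrev DS (k : q.V) :=
  DirectSum (q.In k) fun e => ↥(P K q S (q.s e.1))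

/-- The presentation map `(αⱼ)ⱼ : ⊕_{j → k} P_j → P_k` whose components are left
multiplication by the arrows into `k`. -/
noncomputable def pres (k : q.V) :
    DS K q S k →ₗ[(Jacob K q S)ᵐᵒᵖ] ↥(P K q S k) :=
  DirectSum.toModule _ _ _ fun e => arrMul K q S k e

/-- The two-term complex `T_k = (⊕_{j → k} P_j → P_k)` of right modules over the
Jacobian algebra (with `⊕_{j → k} P_j` in degree `0` and `P_k` in degree `1`). -/
noncomputable def Tk (k : q.V) : CochainComplex (ModuleCat (Jacob K q S)ᵐᵒᵖ) ℤ :=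
  twoTerm (ModuleCat.of (Jacob K q S)ᵐᵒᵖ (DS K q S k))
    (ModuleCat.of (Jacob K q S)ᵐᵒᵖ (↥(P K q S k)))
    (ModuleCat.ofHom (pres K q S k))

/-- The stalk complex of a right module placed in degree `0`. -/
noncomputable def stalk (M : Type) [AddCommGroup M] [Module (Jacob K q S)ᵐᵒᵖ M] :
    CochainComplex (ModuleCat (Jacob K q S)ᵐᵒᵖ) ℤ :=
  (HomologicalComplex.single (ModuleCat (Jacob K q S)ᵐᵒᵖ) (ComplexShape.up ℤ) 0).obj
    (ModuleCat.of (Jacob K q S)ᵐᵒᵖ M)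

/-- The canonical functor from complexes to the homotopy category. -/
noncomputable def ho (X : CochainComplex (ModuleCat (Jacob K q S)ᵐᵒᵖ) ℤ) :
    HomotopyCategory (ModuleCat (Jacob K q S)ᵐᵒᵖ) (ComplexShape.up ℤ) :=
  (HomotopyCategory.quotient _ _).obj X

end Quiv

/-!
Suppose `λ_t ṽ_t = h_t γ` in `J(Q,S)` for all `t`. Let `J(Q,S)` act on the quotient of `KQ e_{tβ}`
by the span of the paths that end with `γ` or contain a term of some cyclic derivative `∂S/∂x`:
this span is stable under left multiplication by `KQ` and contains all relations of `J(Q,S)`.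
Applying `λ_t ṽ_t = h_t γ` to `e_{tβ}` shows that `ṽ_t` ends with `γ` or contains such a term.
Goodness of `S` rules out both for a suitable `t`. Without loops and 2-cycles, a term of `∂S/∂x`
(a cycle of `S` minus one arrow) has a length-two subpath; inside `ṽ_t` this subpath lies on the
cycle `α_{j_t} ṽ_t β`, so the two cycles coincide and the term is too long to fit in `ṽ_t`. And at
most one term of `∂S/∂β` can end with the length-two subpath `γβ`, while there are at least two.
-/

lemma List.Nodup.rotate_eq_rotate_of_getElem? {α : Type*} {l : List α} (hl : l.Nodup)
    {m n i : ℕ} {x : α} (hm : (l.rotate m)[i]? = some x) (hn : (l.rotate n)[i]? = some x) :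
    l.rotate m = l.rotate n := by
  have hi : i < l.length := by simpa using (List.getElem?_eq_some_iff.1 hm).1
  rw [List.getElem?_rotate hi, List.getElem?_eq_some_iff] at hm hn
  obtain ⟨_, hm⟩ := hm
  obtain ⟨_, hn⟩ := hn
  exact hl.rotate_congr_iff.2 (Or.inl (Nat.ModEq.add_left_cancel' i
    (hl.getElem_inj_iff.1 (hm.trans hn.symm))))

lemma Cycle.Chain.isChain {α : Type*} {R : α → α → Prop} {l : List α}
    (h : Cycle.Chain R (l : Cycle α)) : l.IsChain R := by
  cases l with
  | nil => exact List.IsChain.nil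
  | cons a l =>
    rw [Cycle.chain_coe_cons, ← List.cons_append] at h
    exact (List.isChain_append.1 h).1

namespace Submodule

variable {R A M : Type*} [CommRing R] [Ring A] [Algebra R A] [AddCommGroup M] [Module R M]

noncomputable def endQuotientAlgHom (N : Submodule R M) (ρ : A →ₐ[R] Module.End R M)
    (hρ : ∀ a, N ≤ N.comap (ρ a)) : A →ₐ[R] Module.End R (M ⧸ N) where
  toFun a := N.mapQ N (ρ a) (hρ a)
  map_one' := by ext; simp
  map_mul' _ _ := by ext; simp
  map_zero' := by ext; simp
  map_add' _ _ := by ext; simp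
  commutes' _ := by ext; simp

@[simp]
lemma endQuotientAlgHom_mk (N : Submodule R M) (ρ : A →ₐ[R] Module.End R M)
    (hρ : ∀ a, N ≤ N.comap (ρ a)) (a : A) (x : M) :
    N.endQuotientAlgHom ρ hρ a (Quotient.mk x) = Quotient.mk (ρ a x) :=
  rfl

end Submodule

namespace Finsupp

lemma mem_support_sum_single {ι α M : Type*} [Fintype ι] [AddCommMonoid M] {f : ι → α}
    (hf : Function.Injective f) (c : ι → M) {i : ι} (hi : c i ≠ 0) :
    f i ∈ (∑ j, single (f j) (c j)).support := by
  classical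
  simpa [finsetSum_apply, single_apply, hf.eq_iff] using hi

lemma supported_le_comap_of_single {α R : Type*} [Semiring R] {s : Set α}
    {f : (α →₀ R) →ₗ[R] α →₀ R} (hf : ∀ a ∈ s, f (single a 1) ∈ supported R R s) :
    supported R R s ≤ (supported R R s).comap f := by
  nth_rw 1 [Finsupp.supported_eq_span_single]
  rw [Submodule.span_le]
  rintro _ ⟨a, ha, rfl⟩
  exact hf a ha

end Finsupp

namespace Quiv

variable {q : _root_.Quiv}

section Combinatorics

lemma cycPairs_rotate (l : List q.E) (n : ℕ) :
    q.cycPairs (l.rotate n) = (q.cycPairs l).rotate n := by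
  change List.zipWith Prod.mk _ _ = (List.zipWith Prod.mk _ _).rotate n
  rw [List.zipWith_rotate_distrib _ _ _ _ (by simp), List.rotate_rotate, List.rotate_rotate,
    add_comm]

lemma map_fst_cycPairs (l : List q.E) : (q.cycPairs l).map Prod.fst = l :=
  List.map_fst_zip (by simp)

lemma getElem?_cycPairs_append_pair (u : List q.E) (a b : q.E) :
    (q.cycPairs (u ++ [a, b]))[u.length]? = some (a, b) := by
  simp [cycPairs]

lemma mem_cycPairs_of_infix {a b : q.E} {l : List q.E} (h : [a, b] <:+: l) :
    (a, b) ∈ q.cycPairs l := by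
  obtain ⟨u, w, rfl⟩ := h
  have h := List.mem_of_getElem? (getElem?_cycPairs_append_pair (q := q) (w ++ u) a b)
  rwa [List.append_assoc, ← List.rotate_append_length_eq (u ++ [a, b]), cycPairs_rotate,
    List.mem_rotate] at h

lemma mem_cycPairs_of_infix_rotate {a b : q.E} {l : List q.E} {n : ℕ}
    (h : [a, b] <:+: l.rotate n) : (a, b) ∈ q.cycPairs l := by
  simpa [cycPairs_rotate] using mem_cycPairs_of_infix h

lemma isPath_iff_isChain : ∀ {l : List q.E}, q.IsPath l ↔ l.IsChain (fun a b => q.s a = q.t b)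
  | [] | [_] => by simp [IsPath]
  | _ :: _ :: _ => by simp [IsPath, isPath_iff_isChain]

lemma IsCycle.cycleChain {l : List q.E} (h : q.IsCycle l) :
    Cycle.Chain (fun a b => q.s a = q.t b) (l : Cycle q.E) := by
  obtain ⟨hne, hp, hst⟩ := h
  obtain ⟨a, l, rfl⟩ := List.exists_cons_of_ne_nil hne
  rw [Cycle.chain_coe_cons, ← List.cons_append, List.isChain_append]
  refine ⟨isPath_iff_isChain.1 hp, List.isChain_singleton _, ?_⟩
  obtain ⟨x, hx, hsx⟩ : ∃ x, (a :: l).getLast? = some x ∧ q.s x = q.t a := by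
    simpa [pSrc, pTgt] using hst
  simp [hx, hsx]

lemma IsCycle.isChain_rotate {l : List q.E} (h : q.IsCycle l) (n : ℕ) :
    (l.rotate n).IsChain (fun a b => q.s a = q.t b) :=
  Cycle.Chain.isChain <| by
    rw [Cycle.coe_eq_coe.2 (List.IsRotated.symm ⟨n, rfl⟩)]
    exact h.cycleChain

lemma IsCycle.three_le_length (hNoLoops : ∀ e : q.E, q.s e ≠ q.t e)
    (hNoTwoCycles : ∀ e f : q.E, ¬(q.s e = q.t f ∧ q.s f = q.t e)) {l : List q.E}
    (h : q.IsCycle l) : 3 ≤ l.length := by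
  have hc := h.cycleChain
  match l, h.1 with
  | [a], _ => exact absurd ((Cycle.chain_singleton _ a).1 hc) (hNoLoops a)
  | [a, b], _ => exact absurd (by simpa using hc) (hNoTwoCycles a b)
  | _ :: _ :: _ :: _, _ => simp

variable {K : Type} [Field K] {S : List q.E →₀ K}

lemma Good.eq_of_mem_cycPairs (hS : q.Good K S) {l l' : List q.E} (hl : l ∈ S.support)
    (hl' : l' ∈ S.support) {x : q.E × q.E} (h : x ∈ q.cycPairs l) (h' : x ∈ q.cycPairs l') :
    l = l' := by
  classical
  by_contra hne
  have hle := (Finset.sum_le_sum_of_subset (f := fun l => (q.cycPairs l).count x)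
    (Finset.insert_subset hl (Finset.singleton_subset_iff.2 hl'))).trans (hS.2.2 x)
  rw [Finset.sum_pair hne] at hle
  have := List.count_pos_iff.2 h
  have := List.count_pos_iff.2 h'
  omega

lemma Good.nodup_cycPairs (hS : q.Good K S) {l : List q.E} (hl : l ∈ S.support) :
    (q.cycPairs l).Nodup := by
  classical
  exact List.nodup_iff_count_le_one.2 fun x =>
    (Finset.single_le_sum (f := fun l => (q.cycPairs l).count x) (fun _ _ => Nat.zero_le _)
      hl).trans (hS.2.2 x)

lemma Good.eq_of_rotate_eq_append_pair (hS : q.Good K S) {l l' : List q.E}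
    (hl : l ∈ S.support) (hl' : l' ∈ S.support) {m m' : ℕ} {u u' : List q.E} {a b : q.E}
    (h : l.rotate m = u ++ [a, b]) (h' : l'.rotate m' = u' ++ [a, b]) : u = u' := by
  obtain rfl : l = l' := hS.eq_of_mem_cycPairs hl hl'
    (mem_cycPairs_of_infix_rotate (h ▸ (List.suffix_append u [a, b]).isInfix))
    (mem_cycPairs_of_infix_rotate (h' ▸ (List.suffix_append u' [a, b]).isInfix))
  have hlen : u.length = u'.length := by
    have h₁ := congrArg List.length h
    have h₂ := congrArg List.length h'
    simp only [List.length_rotate, List.length_append, List.length_cons] at h₁ h₂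
    omega
  have hrot : (q.cycPairs l).rotate m = (q.cycPairs l).rotate m' :=
    (hS.nodup_cycPairs hl).rotate_eq_rotate_of_getElem?
      (by rw [← cycPairs_rotate, h, getElem?_cycPairs_append_pair])
      (by rw [← cycPairs_rotate, h', hlen, getElem?_cycPairs_append_pair])
  have := congrArg (List.map Prod.fst) hrot
  rw [List.map_rotate, List.map_rotate, map_fst_cycPairs, h, h'] at this
  exact List.append_cancel_right this

lemma exists_rotate_eq_of_mem_support_cycDerList {x : q.E} {l d : List q.E}
    (hd : d ∈ (q.cycDerList K x l).support) : ∃ m, l.rotate m = d ++ [x] := by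
  classical
  rw [cycDerList] at hd
  obtain ⟨k, hk, hdk⟩ := Finset.mem_biUnion.1 (Finsupp.support_finsetSum hd)
  rw [Finset.mem_range] at hk
  split_ifs at hdk with hx
  · rw [Finsupp.support_single _ one_ne_zero, Finset.mem_singleton] at hdk
    refine ⟨k + 1, ?_⟩
    rw [List.rotate_eq_drop_append_take hk, List.take_add_one, hx, hdk]
    simp
  · simp at hdk

lemma exists_rotate_eq_of_mem_support_cycDer {x : q.E} {d : List q.E}
    (hd : d ∈ (q.cycDer K x S).support) : ∃ l ∈ S.support, ∃ m, l.rotate m = d ++ [x] := by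
  classical
  obtain ⟨l, hl, hdl⟩ := Finset.mem_biUnion.1 (Finsupp.support_sum hd)
  exact ⟨l, hl, exists_rotate_eq_of_mem_support_cycDerList (Finsupp.support_smul hdl)⟩

lemma Good.not_infix_of_rotate_eq (hS : q.Good K S) (hNoLoops : ∀ e : q.E, q.s e ≠ q.t e)
    (hNoTwoCycles : ∀ e f : q.E, ¬(q.s e = q.t f ∧ q.s f = q.t e)) {l : List q.E}
    (hl : l ∈ S.support) {m : ℕ} {a x : q.E} {p : List q.E} (h : l.rotate m = a :: p ++ [x])
    {y : q.E} {d : List q.E} (hd : d ∈ (q.cycDer K y S).support) : ¬ d <:+: p := by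
  intro hdp
  obtain ⟨l', hl', m', hm'⟩ := exists_rotate_eq_of_mem_support_cycDer hd
  have hlen' := congrArg List.length hm'
  have hlen := congrArg List.length h
  have h3 := (hS.1 l' hl').three_le_length hNoLoops hNoTwoCycles
  simp only [List.length_rotate, List.length_append, List.length_cons, List.length_nil]
    at hlen hlen'
  obtain _ | ⟨b, _ | ⟨c, d'⟩⟩ := d
  · simp at hlen'; omega
  · simp at hlen'; omega
  obtain rfl : l = l' := hS.eq_of_mem_cycPairs hl hl'
    (mem_cycPairs_of_infix_rotate (h ▸ ((List.prefix_append [b, c] d').isInfix.trans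
      (hdp.trans ⟨[a], [x], rfl⟩))))
    (mem_cycPairs_of_infix_rotate (hm' ▸ (List.prefix_append [b, c] _).isInfix))
  have := hdp.length_le
  simp only [List.length_cons] at this hlen'
  omega

variable (S) in
def ContainsRelOrEndsWith (γ : q.E) (p : List q.E) : Prop :=
  [γ] <:+ p ∨ ∃ x, ∃ d ∈ (q.cycDer K x S).support, d <:+: p

lemma ContainsRelOrEndsWith.cons {γ : q.E} {p : List q.E}
    (h : ContainsRelOrEndsWith S γ p) (a : q.E) : ContainsRelOrEndsWith S γ (a :: p) := by
  rcases h with h | ⟨x, d, hd, h⟩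
  · exact Or.inl (h.trans (List.suffix_cons a p))
  · exact Or.inr ⟨x, d, hd, h.trans (List.suffix_cons a p).isInfix⟩

end Combinatorics

section Representation

def tgtFrom (j₀ : q.V) : List q.E → q.V
  | [] => j₀
  | a :: _ => q.t a

@[simp]
lemma tgtFrom_nil (j₀ : q.V) : tgtFrom j₀ [] = j₀ := rfl

@[simp]
lemma tgtFrom_cons (j₀ : q.V) (a : q.E) (p : List q.E) : tgtFrom j₀ (a :: p) = q.t a := rfl

variable (K : Type) [Field K] [DecidableEq q.V] (j₀ : q.V)

noncomputable def vtxAct (i : q.V) : Module.End K (List q.E →₀ K) :=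
  Finsupp.lsum K fun p => if tgtFrom j₀ p = i then Finsupp.lsingle p else 0

noncomputable def arrAct (a : q.E) : Module.End K (List q.E →₀ K) :=
  Finsupp.lsum K fun p => if q.s a = tgtFrom j₀ p then Finsupp.lsingle (a :: p) else 0

@[simp]
lemma vtxAct_single (i : q.V) (p : List q.E) (c : K) :
    vtxAct K j₀ i (Finsupp.single p c) = if tgtFrom j₀ p = i then Finsupp.single p c else 0 := by
  rw [vtxAct, Finsupp.lsum_single]
  split_ifs <;> simp

@[simp]
lemma arrAct_single (a : q.E) (p : List q.E) (c : K) :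
    arrAct K j₀ a (Finsupp.single p c) =
      if q.s a = tgtFrom j₀ p then Finsupp.single (a :: p) c else 0 := by
  rw [arrAct, Finsupp.lsum_single]
  split_ifs <;> simp

noncomputable def freeRep :
    FreeAlgebra K (q.V ⊕ q.E) →ₐ[K] Module.End K (List q.E →₀ K) :=
  FreeAlgebra.lift K (Sum.elim (vtxAct K j₀) (arrAct K j₀))

@[simp]
lemma freeRep_ι_inl (i : q.V) : freeRep K j₀ (FreeAlgebra.ι K (Sum.inl i)) = vtxAct K j₀ i := by
  simp [freeRep]

@[simp]
lemma freeRep_ι_inr (a : q.E) : freeRep K j₀ (FreeAlgebra.ι K (Sum.inr a)) = arrAct K j₀ a := by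
  simp [freeRep]

variable [Fintype q.V]

lemma freeRep_eq_of_pathRel {x y : FreeAlgebra K (q.V ⊕ q.E)} (h : PathRel K q x y) :
    freeRep K j₀ x = freeRep K j₀ y := by
  refine Finsupp.lhom_ext fun p c => ?_
  cases h <;> simp <;> split_ifs <;> simp_all <;> grind

/-- The left `KQ`-module `KQ e_{j₀}`: a list `p` of arrows stands for the path `p` starting at
`j₀` (with `[]` the trivial path), and `tgtFrom j₀ p` is its target. -/
noncomputable def pathRep : PathAlg K q →ₐ[K] Module.End K (List q.E →₀ K) :=
  RingQuot.liftAlgHom K ⟨freeRep K j₀, fun _ _ => freeRep_eq_of_pathRel K j₀⟩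

lemma pathRep_mk (x : FreeAlgebra K (q.V ⊕ q.E)) :
    pathRep K j₀ (RingQuot.mkAlgHom K (PathRel K q) x) = freeRep K j₀ x :=
  RingQuot.liftAlgHom_mkAlgHom_apply K _ _ x

@[simp]
lemma pathRep_arr (a : q.E) : pathRep K j₀ (arr K q a) = arrAct K j₀ a :=
  (pathRep_mk K j₀ _).trans (freeRep_ι_inr K j₀ a)

lemma pathRep_pathEl_single (p w : List q.E) (c : K) :
    ∃ c' : K, pathRep K j₀ (pathEl K q p) (Finsupp.single w c) = Finsupp.single (p ++ w) c' := by
  induction p with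
  | nil => exact ⟨c, by simp [pathEl]⟩
  | cons a p ih =>
    obtain ⟨c', hc'⟩ := ih
    refine ⟨if q.s a = tgtFrom j₀ (p ++ w) then c' else 0, ?_⟩
    simp only [pathEl, map_mul, Module.End.mul_apply, hc', pathRep_arr, arrAct_single]
    split_ifs <;> simp

lemma pathRep_pathEl_nil {p : List q.E} {b : q.E}
    (hp : (p ++ [b]).IsChain (fun x y => q.s x = q.t y)) :
    pathRep K (q.t b) (pathEl K q p) (Finsupp.single [] 1) = Finsupp.single p 1 := by
  induction p with
  | nil => simp [pathEl]
  | cons a p ih =>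
    have hs : q.s a = tgtFrom (q.t b) p := by
      cases p <;> simpa using (List.isChain_cons.1 hp).1
    simp [pathEl, ih (List.isChain_cons.1 hp).2, hs]

lemma supported_le_comap_pathRep {B : List q.E → Prop} (hB : ∀ a p, B p → B (a :: p))
    (g : PathAlg K q) :
    Finsupp.supported K K {p | B p} ≤
      (Finsupp.supported K K {p | B p}).comap (pathRep K j₀ g) := by
  obtain ⟨x, rfl⟩ := RingQuot.mkAlgHom_surjective K (PathRel K q) g
  rw [pathRep_mk]
  induction x using FreeAlgebra.induction with
  | grade0 r => exact fun z hz => by simpa using Submodule.smul_mem _ r hz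
  | grade1 x =>
    refine Finsupp.supported_le_comap_of_single fun p hp => ?_
    rcases x with i | a <;> simp only [freeRep_ι_inl, freeRep_ι_inr, vtxAct_single,
      arrAct_single] <;> split_ifs
    · exact Finsupp.single_mem_supported K 1 hp
    · exact zero_mem _
    · exact Finsupp.single_mem_supported K 1 (hB a p hp)
    · exact zero_mem _
  | mul a b ha hb =>
    exact fun z hz => by
      rw [Submodule.mem_comap, map_mul, Module.End.mul_apply]; exact ha (hb hz)
  | add a b ha hb =>
    exact fun z hz => by
      rw [Submodule.mem_comap, map_add, LinearMap.add_apply]; exact add_mem (ha hz) (hb hz)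

variable (S : List q.E →₀ K) {B : List q.E → Prop}

lemma pathRep_el_mem_supported (hS : ∀ x, ∀ d ∈ (q.cycDer K x S).support, ∀ w, B (d ++ w))
    (x : q.E) (w : List q.E) (c : K) :
    pathRep K j₀ (el K q (q.cycDer K x S)) (Finsupp.single w c) ∈
      Finsupp.supported K K {p | B p} := by
  rw [el, map_finsuppSum, Finsupp.sum, LinearMap.sum_apply]
  refine Submodule.sum_mem _ fun d hd => ?_
  obtain ⟨c', hc'⟩ := pathRep_pathEl_single K j₀ d w c
  rw [map_smul, LinearMap.smul_apply, hc']
  exact Submodule.smul_mem _ _ (Finsupp.single_mem_supported K c' (hS x d hd w))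

noncomputable def jacobRep (hB : ∀ a p, B p → B (a :: p))
    (hS : ∀ x, ∀ d ∈ (q.cycDer K x S).support, ∀ w, B (d ++ w)) :
    Jacob K q S →ₐ[K] Module.End K ((List q.E →₀ K) ⧸ Finsupp.supported K K {p | B p}) :=
  RingQuot.liftAlgHom K ⟨(Finsupp.supported K K {p | B p}).endQuotientAlgHom (pathRep K j₀)
    (supported_le_comap_pathRep K j₀ hB), by
      rintro _ _ ⟨x⟩
      refine Submodule.linearMap_qext _ (Finsupp.lhom_ext fun w c => ?_)
      simpa [Submodule.Quotient.mk_eq_zero] using pathRep_el_mem_supported K j₀ S hS x w c⟩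

lemma jacobRep_mk (hB : ∀ a p, B p → B (a :: p))
    (hS : ∀ x, ∀ d ∈ (q.cycDer K x S).support, ∀ w, B (d ++ w)) (z : PathAlg K q)
    (v : List q.E →₀ K) :
    jacobRep K j₀ S hB hS (jmk K q S z) (Submodule.Quotient.mk v) =
      Submodule.Quotient.mk (pathRep K j₀ z v) :=
  LinearMap.congr_fun (RingQuot.liftAlgHom_mkAlgHom_apply K _ _ z) _

variable {K S} in
lemma containsRelOrEndsWith_of_smul_pathJ_eq_mul_arrJ [Fintype q.E] [DecidableEq q.E]
    {β γ : q.E} (hγ : q.s γ = q.t β) {p : List q.E}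
    (hp : (p ++ [β]).IsChain (fun x y => q.s x = q.t y)) {c : K} (hc : c ≠ 0)
    {g : Jacob K q S} (h : c • pathJ K q S p = g * arrJ K q S γ) :
    ContainsRelOrEndsWith S γ p := by
  have hB : ∀ a p, ContainsRelOrEndsWith S γ p → ContainsRelOrEndsWith S γ (a :: p) :=
    fun a _ h => h.cons a
  have hS : ∀ x, ∀ d ∈ (q.cycDer K x S).support, ∀ w, ContainsRelOrEndsWith S γ (d ++ w) :=
    fun x d hd w => Or.inr ⟨x, d, hd, (List.prefix_append d w).isInfix⟩
  have hγ0 : (Submodule.Quotient.mk (Finsupp.single [γ] 1) :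
      _ ⧸ Finsupp.supported K K {p | ContainsRelOrEndsWith S γ p}) = 0 :=
    (Submodule.Quotient.mk_eq_zero _).2
      (Finsupp.single_mem_supported K 1 (Or.inl List.suffix_rfl))
  have key := congrArg
    (fun y => jacobRep K (q.t β) S hB hS y (Submodule.Quotient.mk (Finsupp.single [] 1))) h
  simp only [map_smul, LinearMap.smul_apply, map_mul, Module.End.mul_apply, pathJ, arrJ,
    jacobRep_mk, pathRep_pathEl_nil K hp, pathRep_arr, arrAct_single, tgtFrom_nil, hγ, if_true,
    hγ0, map_zero, smul_eq_zero, hc, false_or, Submodule.Quotient.mk_eq_zero] at key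
  simpa using (Finsupp.mem_supported K _).1 key (by simp)

end Representation

end Quiv

open Quiv in
theorem dual_arrow_is_irreducible_general
    (K : Type) [Field K] (q : _root_.Quiv) [Fintype q.V] [Fintype q.E]
    [DecidableEq q.V] [DecidableEq q.E] (S : List q.E →₀ K)
    (hNoLoops : ∀ e : q.E, q.s e ≠ q.t e)
    (hNoTwoCycles : ∀ e f : q.E, ¬(q.s e = q.t f ∧ q.s f = q.t e))
    (hGood : q.Good K S)
    (k : q.V) (β : q.E)
    -- the decomposition ∂S/∂β = Σ_t λ_t α_{j_t} ṽ_t with d ≥ 2 terms starting with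
    -- pairwise distinct arrows into k
    (n : ℕ) (hn : 2 ≤ n) (lam : Fin n → K) (al : Fin n → q.In k) (vt : Fin n → List q.E)
    (hlam : ∀ t, lam t ≠ 0) (hal : Function.Injective al)
    (hdecomp : q.cycDer K β S = ∑ t, lam t • Finsupp.single ((al t).1 :: vt t) 1) :
    -- β* (given componentwise by the λ_t ṽ_t) does not factor through any arrow
    -- γ : i → r with r ≠ k:
    ¬ ∃ (r : q.V) (_ : r ≠ k) (γ : q.E) (_ : q.s γ = q.t β ∧ q.t γ = r)
        (h : q.In k → Jacob K q S),
        ∀ e : q.In k,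
          (∑ t, if al t = e then lam t • pathJ K q S (vt t) else 0)
            = h e * arrJ K q S γ := by
  rintro ⟨-, -, γ, ⟨hγ, -⟩, g, hfac⟩
  have hinj : Function.Injective fun t => (al t).1 :: vt t :=
    fun t t' h => hal (Subtype.ext (List.cons.inj h).1)
  have hterm : ∀ t, ∃ l ∈ S.support, ∃ m, l.rotate m = (al t).1 :: vt t ++ [β] := fun t =>
    exists_rotate_eq_of_mem_support_cycDer (by
      simpa only [hdecomp, Finsupp.smul_single_one] using
        Finsupp.mem_support_sum_single hinj lam (hlam t))
  choose L hL m hm using hterm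
  have hγβ : ∀ t t', [γ] <:+ vt t → [γ] <:+ vt t' → t = t' := by
    rintro t t' ⟨w, hw⟩ ⟨w', hw'⟩
    have := hGood.eq_of_rotate_eq_append_pair (hL t) (hL t') (a := γ) (b := β)
      (u := (al t).1 :: w) (u' := (al t').1 :: w') (by rw [hm, ← hw]; simp)
      (by rw [hm, ← hw']; simp)
    exact hal (Subtype.ext (List.cons.inj this).1)
  obtain ⟨t₀, ht₀⟩ : ∃ t₀, ¬ [γ] <:+ vt t₀ := by
    by_contra! hall
    exact absurd (hγβ ⟨0, by omega⟩ ⟨1, by omega⟩ (hall _) (hall _)) (by simp)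
  have hchain : (vt t₀ ++ [β]).IsChain (fun x y => q.s x = q.t y) :=
    ((hGood.1 _ (hL t₀)).isChain_rotate (m t₀)).infix (by rw [hm]; exact ⟨[(al t₀).1], [], by simp⟩)
  have hfac₀ : lam t₀ • pathJ K q S (vt t₀) = g (al t₀) * arrJ K q S γ := by
    simpa [hal.eq_iff] using hfac (al t₀)
  rcases containsRelOrEndsWith_of_smul_pathJ_eq_mul_arrJ hγ hchain (hlam t₀) hfac₀ with
    h | ⟨x, d, hd, h⟩
  · exact ht₀ h
  · exact hGood.not_infix_of_rotate_eq hNoLoops hNoTwoCycles (hL t₀) (hm t₀) hd h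

open Quiv in
/-- For a vertex `k` of a quiver with good potential, the map
`β* : P_i → ⊕_{j→k} P_j` constructed from `∂S/∂β = Σ_t λ_t α_{j_t} ṽ_t` (with `d ≥ 2` terms
starting with pairwise distinct arrows into `k`) is irreducible: it does not factor as a
composition of a nontrivial map `P_i → P_r` (`r ≠ k`, given by an arrow `γ` of `Q`)
followed by a map `P_r → ⊕_{j→k} P_j`; such a factorization would force all terms of
`∂S/∂β` to share the length-two subpath `γβ`, contradicting goodness of `S`. -/
theorem dual_arrow_is_irreducible
    (K : Type) [Field K] (q : _root_.Quiv) [Fintype q.V] [Fintype q.E]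
    [DecidableEq q.V] [DecidableEq q.E] (S : List q.E →₀ K)
    (hNoLoops : ∀ e : q.E, q.s e ≠ q.t e)
    (hNoTwoCycles : ∀ e f : q.E, ¬(q.s e = q.t f ∧ q.s f = q.t e))
    (hGood : q.Good K S)
    (k : q.V) (β : q.E) (hβ : q.s β = k)
    -- the decomposition ∂S/∂β = Σ_t λ_t α_{j_t} ṽ_t with d ≥ 2 terms starting with
    -- pairwise distinct arrows into k
    (n : ℕ) (hn : 2 ≤ n) (lam : Fin n → K) (al : Fin n → q.In k) (vt : Fin n → List q.E)
    (hlam : ∀ t, lam t ≠ 0) (hal : Function.Injective al)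
    (hdecomp : q.cycDer K β S = ∑ t, lam t • Finsupp.single ((al t).1 :: vt t) 1) :
    -- β* (given componentwise by the λ_t ṽ_t) does not factor through any arrow
    -- γ : i → r with r ≠ k:
    ¬ ∃ (r : q.V) (_ : r ≠ k) (γ : q.E) (_ : q.s γ = q.t β ∧ q.t γ = r)
        (h : q.In k → Jacob K q S),
        ∀ e : q.In k,
          (∑ t, if al t = e then lam t • pathJ K q S (vt t) else 0)
            = h e * arrJ K q S γ :=
  dual_arrow_is_irreducible_general K q S hNoLoops hNoTwoCycles hGood k β n hn lam al vt hlam hal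
    hdecomp
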